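/- The group Γ₀ = ker ℓ₀ ≤ A_{G₀} is isomorphic to the double of A_L over the normal subgroup Γ_L, that is, to the amalgamated free product A_L *_{Γ_L} A_L: the pushout of two copies of the inclusion homomorphism Γ_L ↪ A_L (in Lean: Monoid.PushoutI (fun _ : Bool => (Γ_L).subtype)), where Γ_L = ker ℓ is the kernel of the length homomorphism ℓ : A_L → ℤ. -/

import Mathlib

/-- The relator set of the right-angled Artin group of a simple graph `G`:
commutators of pairs of adjacent vertices. -/
def raagRels {V : Type*} (G : SimpleGraph V) : Set (FreeGroup V) :=
  {r | ∃ u v : V, G.Adj u v ∧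
    r = FreeGroup.of u * FreeGroup.of v * (FreeGroup.of u)⁻¹ * (FreeGroup.of v)⁻¹}

/-- The right-angled Artin group of a simple graph `G`. -/
abbrev RAAG {V : Type*} (G : SimpleGraph V) : Type _ :=
  PresentedGroup (raagRels G)

/-- The image `v̄` of a vertex (generator) `v` in the right-angled Artin group. -/
def RAAG.gen {V : Type*} (G : SimpleGraph V) (v : V) : RAAG G :=
  PresentedGroup.of (rels := raagRels G) v

/-- The path graph `L` on the four vertices `u₁ = 0, u₂ = 1, u₃ = 2, u₄ = 3`,
with edges `{u₁,u₂}, {u₂,u₃}, {u₃,u₄}`. -/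
abbrev L : SimpleGraph (Fin 4) := SimpleGraph.pathGraph 4

/-- The right-angled Artin group
`A_L = ⟨u₁,u₂,u₃,u₄ ∣ [u₁,u₂] = [u₂,u₃] = [u₃,u₄] = 1⟩`. -/
abbrev A_L : Type _ := RAAG L

/-- `a = ū₂⁻¹ū₁`. -/
def elt_a : A_L := (RAAG.gen L 1)⁻¹ * RAAG.gen L 0

/-- `x = ū₂⁻¹ū₃`. -/
def elt_x : A_L := (RAAG.gen L 1)⁻¹ * RAAG.gen L 2

/-- `e = ū₃⁻¹ū₄`. -/
def elt_e : A_L := (RAAG.gen L 2)⁻¹ * RAAG.gen L 3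

/-- The homomorphism `φ : FreeGroup (Fin 3) →* A_L` with `φ g₀ = a`, `φ g₁ = x`,
`φ g₂ = e`. -/
def phi : FreeGroup (Fin 3) →* A_L := FreeGroup.lift ![elt_a, elt_x, elt_e]

/-- The graph `G₀` on six vertices `u₁ = 0, u₂ = 1, u₃ = 2, u₄ = 3, p = 4, q = 5`:
the 1-skeleton of the suspension of the path `L`.  Its edges are
`{u₁,u₂}, {u₂,u₃}, {u₃,u₄}` together with `{p,uᵢ}` and `{q,uᵢ}` for `i = 1,2,3,4`. -/
def G₀ : SimpleGraph (Fin 6) := SimpleGraph.fromRel (fun i j =>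
  (i = 0 ∧ j = 1) ∨ (i = 1 ∧ j = 2) ∨ (i = 2 ∧ j = 3) ∨
  ((i = 4 ∨ i = 5) ∧ (j = 0 ∨ j = 1 ∨ j = 2 ∨ j = 3)))


/-!
The suspension `G₀` is the join of `L` with the two non-adjacent vertices `p, q`, so
`A_{G₀} ≅ A_L × F(p, q)`, and `ℓ₀` becomes `ℓ` plus the exponent sum. For any group `A` with
`ℓ : A → ℤ` and an element `a` of length one, `A × F(p, q)` splits as `D ⋊ ⟨t⟩`, where
`D = A *_{ker ℓ} A` embeds by `ι_b g ↦ (g, b ^ (-ℓ g))` (the two factors indexed by `b = p, q`,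
i.e. `false, true`) and `t ↦ p` acts on `D` by conjugation. The inverse sends
`g ↦ (ι_p g, t ^ ℓ g)`, `p ↦ (1, t)` and `q ↦ ((ι_q a)⁻¹ ι_p a, t)`; that these images commute as
required only has to be checked on `ker ℓ` and on `a`, which generate `A`. The kernel of `ℓ₀` then
corresponds to the kernel of `D ⋊ ⟨t⟩ → ℤ`, which is `D`.
-/

open Multiplicative

lemma MonoidHom.commute_apply_of_closure_eq_top {G M : Type*} [Group G] [Group M] {S : Set G}
    (hS : Subgroup.closure S = ⊤) (f : G →* M) {x : M} (h : ∀ s ∈ S, Commute x (f s))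
    (g : G) : Commute x (f g) := by
  have hle : Subgroup.closure S ≤ (Subgroup.centralizer {x}).comap f :=
    Subgroup.closure_le _ |>.2 fun s hs => Subgroup.mem_centralizer_singleton_iff.2 (h s hs).symm
  exact (Subgroup.mem_centralizer_singleton_iff.1 (hle (hS ▸ Subgroup.mem_top g))).symm

lemma MonoidHom.prod_ext {M N P : Type*} [Monoid M] [Monoid N] [Monoid P] {f g : M × N →* P}
    (hl : f.comp (MonoidHom.inl M N) = g.comp (MonoidHom.inl M N))
    (hr : f.comp (MonoidHom.inr M N) = g.comp (MonoidHom.inr M N)) : f = g := by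
  rw [← MonoidHom.noncommCoprod_unique f, ← MonoidHom.noncommCoprod_unique g]
  simp only [hl, hr]

def MulEquiv.kerCongr {G M K : Type*} [Group G] [Group M] [Group K] (e : G ≃* M)
    {f : G →* K} {g : M →* K} (h : g.comp e.toMonoidHom = f) : f.ker ≃* g.ker :=
  (e.subgroupMap f.ker).trans <| MulEquiv.subgroupCongr <| by
    rw [← h, ← MonoidHom.comap_ker]
    exact Subgroup.map_comap_eq_self_of_surjective e.surjective _

noncomputable def SemidirectProduct.kerRightHomEquiv {N G : Type*} [Group N] [Group G]
    {φ : G →* MulAut N} : (rightHom : N ⋊[φ] G →* G).ker ≃* N :=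
  ((MonoidHom.ofInjective inl_injective).trans
    (MulEquiv.subgroupCongr range_inl_eq_ker_rightHom)).symm

section

variable {A : Type*} [Group A] (ℓ : A →* Multiplicative ℤ)

abbrev KerDouble : Type _ := Monoid.PushoutI fun _ : Bool => ℓ.ker.subtype

namespace KerDouble

abbrev ι (b : Bool) : A →* KerDouble ℓ := Monoid.PushoutI.of (φ := fun _ : Bool => ℓ.ker.subtype) b

variable {ℓ}

lemma hom_ext {M : Type*} [Monoid M] {f f' : KerDouble ℓ →* M}
    (h : ∀ b, f.comp (ι ℓ b) = f'.comp (ι ℓ b)) : f = f' :=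
  Monoid.PushoutI.hom_ext_nonempty h

lemma ι_eq_base {g : A} (hg : g ∈ ℓ.ker) (b : Bool) :
    ι ℓ b g = Monoid.PushoutI.base _ (⟨g, hg⟩ : ℓ.ker) :=
  Monoid.PushoutI.of_apply_eq_base (fun _ : Bool => ℓ.ker.subtype) b ⟨g, hg⟩

lemma ι_eq_ι_of_mem_ker {g : A} (hg : g ∈ ℓ.ker) (b b' : Bool) : ι ℓ b g = ι ℓ b' g :=
  (ι_eq_base hg b).trans (ι_eq_base hg b').symm

lemma commute_ι_false_of_mem_ker {g : A} (hg : g ∈ ℓ.ker) (a : A) :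
    Commute (ι ℓ false g) ((ι ℓ true a)⁻¹ * ι ℓ false a) := by
  have hconj : ι ℓ true (a * g * a⁻¹) = ι ℓ false (a * g * a⁻¹) :=
    ι_eq_ι_of_mem_ker (ℓ.normal_ker.conj_mem g hg a) true false
  simp only [map_mul, map_inv] at hconj
  calc ι ℓ false g * ((ι ℓ true a)⁻¹ * ι ℓ false a)
      = (ι ℓ true a)⁻¹ * (ι ℓ true a * ι ℓ true g * (ι ℓ true a)⁻¹) * ι ℓ false a := by
        rw [ι_eq_ι_of_mem_ker hg false true]; group
    _ = (ι ℓ true a)⁻¹ * ι ℓ false a * ι ℓ false g := by rw [hconj]; group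

lemma mem_of_ker_le_of_mem {a : A} (ha : ℓ a = ofAdd 1) {S : Subgroup A} (hker : ℓ.ker ≤ S)
    (haS : a ∈ S) (g : A) : g ∈ S := by
  have hγ : g * (a ^ toAdd (ℓ g))⁻¹ ∈ ℓ.ker := by
    simp [ha, ← ofAdd_zsmul]
  simpa using S.mul_mem (hker hγ) (S.zpow_mem haS (toAdd (ℓ g)))

lemma hom_ext_of_ker {M : Type*} [Group M] {a : A} (ha : ℓ a = ofAdd 1) {f f' : A →* M}
    (hker : ∀ g ∈ ℓ.ker, f g = f' g) (hfa : f a = f' a) : f = f' :=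
  MonoidHom.ext (mem_of_ker_le_of_mem ha (S := MonoidHom.eqLocus f f') hker hfa)

lemma commute_of_ker {M : Type*} [Group M] {a : A} (ha : ℓ a = ofAdd 1) {f : A →* M} {x : M}
    (hker : ∀ g ∈ ℓ.ker, Commute (f g) x) (hfa : Commute (f a) x) (g : A) : Commute (f g) x :=
  Subgroup.mem_centralizer_singleton_iff.1 <|
    mem_of_ker_le_of_mem ha (S := (Subgroup.centralizer {x}).comap f)
      (fun g hg => Subgroup.mem_centralizer_singleton_iff.2 (hker g hg))
      (Subgroup.mem_centralizer_singleton_iff.2 hfa) g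

variable (ℓ)

def toProd : KerDouble ℓ →* A × FreeGroup Bool :=
  Monoid.PushoutI.lift
    (fun b => (MonoidHom.id A).prod ((zpowersHom _ (FreeGroup.of b)⁻¹).comp ℓ))
    ((MonoidHom.inl A _).comp ℓ.ker.subtype)
    (fun b => by ext ⟨g, hg⟩ <;> simp [MonoidHom.mem_ker.1 hg])

@[simp] lemma toProd_ι (b : Bool) (g : A) :
    toProd ℓ (ι ℓ b g) = (g, (FreeGroup.of b)⁻¹ ^ toAdd (ℓ g)) :=
  Monoid.PushoutI.lift_of _ _ _ _

-- Conjugation by `p ^ ℓ a`, pulled back along `toProd`.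
def twist (a : A) : KerDouble ℓ →* KerDouble ℓ :=
  Monoid.PushoutI.lift
    (fun b => cond b ((MulAut.conj (ι ℓ false a)⁻¹).toMonoidHom.comp
      ((ι ℓ true).comp (MulAut.conj a).toMonoidHom)) (ι ℓ false))
    (Monoid.PushoutI.base _)
    (by
      rintro (_ | _)
      · exact Monoid.PushoutI.of_comp_eq_base false
      · ext ⟨g, hg⟩
        have hconj : a * g * a⁻¹ ∈ ℓ.ker := ℓ.normal_ker.conj_mem g hg a
        simp only [cond_true, MonoidHom.comp_apply, MulEquiv.coe_toMonoidHom, MulAut.conj_apply,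
          Subgroup.coe_subtype, inv_inv]
        rw [ι_eq_ι_of_mem_ker hconj true false, ← map_inv, ← map_mul, ← map_mul]
        simpa [mul_assoc] using ι_eq_base hg false)

@[simp] lemma twist_ι_false (a g : A) : twist ℓ a (ι ℓ false g) = ι ℓ false g :=
  Monoid.PushoutI.lift_of _ _ _ _

@[simp] lemma twist_ι_true (a g : A) :
    twist ℓ a (ι ℓ true g) = (ι ℓ false a)⁻¹ * ι ℓ true (a * g * a⁻¹) * ι ℓ false a := by
  rw [twist, Monoid.PushoutI.lift_of]
  simp [mul_assoc]

lemma twist_comp_twist (a b : A) : (twist ℓ a).comp (twist ℓ b) = twist ℓ (a * b) := by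
  refine hom_ext fun c => ?_
  cases c
  · ext g; simp
  · ext g; simp [mul_assoc]

lemma twist_one : twist ℓ 1 = MonoidHom.id _ := by
  refine hom_ext fun c => ?_
  cases c
  · ext g; simp
  · ext g; simp

lemma toProd_comp_twist (g : A) : (toProd ℓ).comp (twist ℓ g) =
    (MulAut.conj (MonoidHom.inr A _ (FreeGroup.of false ^ toAdd (ℓ g)))).toMonoidHom.comp
      (toProd ℓ) := by
  refine hom_ext fun c => ?_
  cases c
  · ext h
    · simp
    · simp; group
  · ext h <;> simp <;> group

def twistAut : A →* MulAut (KerDouble ℓ) where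
  toFun a := MonoidHom.toMulEquiv (twist ℓ a) (twist ℓ a⁻¹)
    (by rw [twist_comp_twist, inv_mul_cancel, twist_one])
    (by rw [twist_comp_twist, mul_inv_cancel, twist_one])
  map_one' := MulEquiv.ext fun x => by simp [twist_one]
  map_mul' a b := MulEquiv.ext fun x => by simp [← twist_comp_twist ℓ a b]

@[simp] lemma twistAut_apply (a : A) (x : KerDouble ℓ) : twistAut ℓ a x = twist ℓ a x := rfl

variable (a : A)

def twistPow : Multiplicative ℤ →* MulAut (KerDouble ℓ) := (twistAut ℓ).comp (zpowersHom A a)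

lemma twistPow_apply (m : Multiplicative ℤ) (x : KerDouble ℓ) :
    twistPow ℓ a m x = twist ℓ (a ^ toAdd m) x := rfl

@[simp] lemma twistPow_ι_false (m : Multiplicative ℤ) (g : A) :
    twistPow ℓ a m (ι ℓ false g) = ι ℓ false g := by
  simp [twistPow_apply]

abbrev Twisted : Type _ := KerDouble ℓ ⋊[twistPow ℓ a] Multiplicative ℤ

namespace Twisted

open SemidirectProduct

def ofGroup : A →* Twisted ℓ a where
  toFun g := ⟨ι ℓ false g, ℓ g⟩
  map_one' := by ext <;> simp
  map_mul' g h := by ext <;> simp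

@[simp] lemma ofGroup_left (g : A) : (ofGroup ℓ a g).left = ι ℓ false g := rfl

@[simp] lemma ofGroup_right (g : A) : (ofGroup ℓ a g).right = ℓ g := rfl

lemma ofGroup_apply (g : A) : ofGroup ℓ a g = inl (ι ℓ false g) * inr (ℓ g) :=
  mk_eq_inl_mul_inr _ _

-- `q` goes to `(c, t)`, where `c = (ι true a)⁻¹ * ι false a` is the element with
-- `toProd c * (1, p) = (1, q)`.
def ofFreeGroup : FreeGroup Bool →* Twisted ℓ a :=
  FreeGroup.lift fun b => inl (cond b ((ι ℓ true a)⁻¹ * ι ℓ false a) 1) * inr (ofAdd 1)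

lemma commute_inl_ι_false_inr (g : A) (m : Multiplicative ℤ) :
    Commute (inl (ι ℓ false g) : Twisted ℓ a) (inr m) := by
  ext <;> simp

variable {ℓ a}

lemma ofFreeGroup_of_true : ofFreeGroup ℓ a (FreeGroup.of true) =
    inl ((ι ℓ true a)⁻¹ * ι ℓ false a) * inr (ofAdd 1) := by
  simp [ofFreeGroup]

lemma commute_ofGroup_self_ofFreeGroup_of_true (ha : ℓ a = ofAdd 1) :
    Commute (ofGroup ℓ a a) (ofFreeGroup ℓ a (FreeGroup.of true)) := by
  rw [ofFreeGroup_of_true]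
  refine SemidirectProduct.ext ?_ (mul_comm _ _)
  simp [twistPow_apply, ha]
  group

lemma commute_ofGroup_ofFreeGroup_of_true_of_mem_ker {g : A} (hg : g ∈ ℓ.ker) :
    Commute (ofGroup ℓ a g) (ofFreeGroup ℓ a (FreeGroup.of true)) := by
  rw [ofFreeGroup_of_true]
  refine SemidirectProduct.ext ?_ (mul_comm _ _)
  simpa [MonoidHom.mem_ker.1 hg] using (commute_ι_false_of_mem_ker hg a).eq

lemma commute_ofGroup_ofFreeGroup (ha : ℓ a = ofAdd 1) (g : A) (w : FreeGroup Bool) :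
    Commute (ofGroup ℓ a g) (ofFreeGroup ℓ a w) := by
  refine (ofFreeGroup ℓ a).commute_apply_of_closure_eq_top (FreeGroup.closure_range_of Bool) ?_ w
  rintro _ ⟨(_ | _), rfl⟩
  · simpa [ofFreeGroup, ofGroup_apply] using
      (commute_inl_ι_false_inr ℓ a g (ofAdd 1)).mul_left ((Commute.all _ _).map inr)
  · exact commute_of_ker ha (fun _ => commute_ofGroup_ofFreeGroup_of_true_of_mem_ker)
      (commute_ofGroup_self_ofFreeGroup_of_true ha) g

def ofProd (ha : ℓ a = ofAdd 1) : A × FreeGroup Bool →* Twisted ℓ a :=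
  (ofGroup ℓ a).noncommCoprod (ofFreeGroup ℓ a) (commute_ofGroup_ofFreeGroup ha)

def toProd (ha : ℓ a = ofAdd 1) : Twisted ℓ a →* A × FreeGroup Bool :=
  SemidirectProduct.lift (KerDouble.toProd ℓ)
    ((MonoidHom.inr A _).comp (zpowersHom _ (FreeGroup.of false)))
    (fun m => by
      have hℓm : toAdd (ℓ (a ^ toAdd m)) = toAdd m := by simp [ha, ← ofAdd_zsmul]
      rw [show (twistPow ℓ a m).toMonoidHom = twist ℓ (a ^ toAdd m) from rfl,
        toProd_comp_twist, hℓm]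
      rfl)

lemma toProd_comp_ofProd (ha : ℓ a = ofAdd 1) :
    (toProd ha).comp (ofProd ha) = MonoidHom.id _ := by
  refine MonoidHom.prod_ext ?_ ?_
  · ext g <;> simp [toProd, ofProd, ofGroup_apply]
  · ext b <;> cases b <;> simp [toProd, ofProd, ofFreeGroup, ha]

lemma ofProd_comp_toProd (ha : ℓ a = ofAdd 1) :
    (ofProd ha).comp (toProd ha) = MonoidHom.id _ := by
  refine SemidirectProduct.hom_ext (KerDouble.hom_ext fun b => hom_ext_of_ker ha ?_ ?_) ?_
  · intro g hg
    simp [toProd, ofProd, MonoidHom.mem_ker.1 hg, ofGroup_apply, ι_eq_ι_of_mem_ker hg b false]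
  · cases b <;> simp [toProd, ofProd, ofGroup_apply, ofFreeGroup, ha]
  · refine MonoidHom.ext_mint ?_
    simp [toProd, ofProd, ofFreeGroup]

def prodEquiv (ha : ℓ a = ofAdd 1) : A × FreeGroup Bool ≃* Twisted ℓ a :=
  MonoidHom.toMulEquiv (ofProd ha) (toProd ha) (toProd_comp_ofProd ha) (ofProd_comp_toProd ha)

lemma rightHom_comp_ofProd (ha : ℓ a = ofAdd 1) {ℓ₀ : A × FreeGroup Bool →* Multiplicative ℤ}
    (hinl : ∀ g, ℓ₀ (g, 1) = ℓ g) (hinr : ∀ b, ℓ₀ (1, .of b) = ofAdd 1) :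
    rightHom.comp (ofProd ha) = ℓ₀ := by
  refine MonoidHom.prod_ext (MonoidHom.ext fun g => ?_) (FreeGroup.ext_hom _ _ fun b => ?_)
  · simp [ofProd, hinl]
  · cases b <;> simp [ofProd, ofFreeGroup, hinr]

end Twisted

variable {ℓ}

noncomputable def prodKerEquiv {a : A} (ha : ℓ a = ofAdd 1)
    {ℓ₀ : A × FreeGroup Bool →* Multiplicative ℤ}
    (hinl : ∀ g, ℓ₀ (g, 1) = ℓ g) (hinr : ∀ b, ℓ₀ (1, .of b) = ofAdd 1) :
    ℓ₀.ker ≃* KerDouble ℓ :=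
  ((Twisted.prodEquiv ha).kerCongr (Twisted.rightHom_comp_ofProd ha hinl hinr)).trans
    SemidirectProduct.kerRightHomEquiv

end KerDouble

end

namespace RAAG

variable {V : Type*} {G : SimpleGraph V}

lemma gen_commute_gen {u v : V} (h : G.Adj u v) : Commute (gen G u) (gen G v) := by
  have hrel : PresentedGroup.mk (raagRels G)
      (FreeGroup.of u * FreeGroup.of v * (FreeGroup.of u)⁻¹ * (FreeGroup.of v)⁻¹) = 1 :=
    (QuotientGroup.eq_one_iff _).2 (Subgroup.subset_normalClosure ⟨u, v, h, rfl⟩)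
  rw [← commutatorElement_eq_one_iff_commute]
  simpa [commutatorElement_def, gen, PresentedGroup.of] using hrel

def lift {M : Type*} [Group M] (f : V → M) (hf : ∀ u v, G.Adj u v → Commute (f u) (f v)) :
    RAAG G →* M :=
  PresentedGroup.toGroup (f := f) <| by
    rintro _ ⟨u, v, huv, rfl⟩
    simpa [commutatorElement_def] using commutatorElement_eq_one_iff_commute.2 (hf u v huv)

@[simp] lemma lift_gen {M : Type*} [Group M] (f : V → M)
    (hf : ∀ u v, G.Adj u v → Commute (f u) (f v)) (v : V) : lift f hf (gen G v) = f v :=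
  PresentedGroup.toGroup.of _

lemma hom_ext {M : Type*} [Group M] {f f' : RAAG G →* M} (h : ∀ v, f (gen G v) = f' (gen G v)) :
    f = f' :=
  PresentedGroup.ext h

lemma commute_apply {M : Type*} [Group M] {f : RAAG G →* M} {x : M}
    (h : ∀ v, Commute x (f (gen G v))) (g : RAAG G) : Commute x (f g) :=
  f.commute_apply_of_closure_eq_top (PresentedGroup.closure_range_of _) (by
    rintro _ ⟨v, rfl⟩; exact h v) g

end RAAG

namespace G₀

open RAAG

lemma adj_castLE {u v : Fin 4} (h : L.Adj u v) :
    G₀.Adj (Fin.castLE (by norm_num) u) (Fin.castLE (by norm_num) v) := by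
  rw [SimpleGraph.pathGraph_adj] at h
  rw [G₀, SimpleGraph.fromRel_adj]
  fin_cases u <;> fin_cases v <;> simp_all

def ofPath : A_L →* RAAG G₀ :=
  RAAG.lift (fun i => gen G₀ (Fin.castLE (by norm_num) i)) fun _ _ h =>
    gen_commute_gen (adj_castLE h)

def ofPoles : FreeGroup Bool →* RAAG G₀ := FreeGroup.lift fun b => gen G₀ (cond b 5 4)

lemma commute_ofPath_ofPoles (g : A_L) (w : FreeGroup Bool) :
    Commute (ofPath g) (ofPoles w) := by
  refine ofPoles.commute_apply_of_closure_eq_top (FreeGroup.closure_range_of _) ?_ w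
  rintro _ ⟨b, rfl⟩
  refine (RAAG.commute_apply (fun i => ?_) g).symm
  refine gen_commute_gen ?_
  cases b <;> fin_cases i <;> simp [G₀]

def toProd : RAAG G₀ →* A_L × FreeGroup Bool :=
  RAAG.lift ![(gen L 0, 1), (gen L 1, 1), (gen L 2, 1), (gen L 3, 1), (1, .of false), (1, .of true)]
    (by
      simp only [G₀, SimpleGraph.fromRel_adj]
      rintro u v ⟨-, h | h⟩ <;>
      rcases h with ⟨rfl, rfl⟩ | ⟨rfl, rfl⟩ | ⟨rfl, rfl⟩ | ⟨rfl | rfl, rfl | rfl | rfl | rfl⟩ <;>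
      simp [Prod.commute_iff] <;>
      exact gen_commute_gen (by simp [SimpleGraph.pathGraph_adj]))

def ofProd : A_L × FreeGroup Bool →* RAAG G₀ :=
  ofPath.noncommCoprod ofPoles commute_ofPath_ofPoles

def prodEquiv : RAAG G₀ ≃* A_L × FreeGroup Bool :=
  MonoidHom.toMulEquiv toProd ofProd
    (RAAG.hom_ext fun v => by fin_cases v <;> simp [toProd, ofProd, ofPath, ofPoles])
    (MonoidHom.prod_ext (RAAG.hom_ext fun i => by fin_cases i <;> simp [toProd, ofProd, ofPath])
      (FreeGroup.ext_hom _ _ fun b => by cases b <;> simp [toProd, ofProd, ofPoles]))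

end G₀

theorem stmt_11 (ℓ : A_L →* Multiplicative ℤ)
    (hℓ : ∀ i : Fin 4, ℓ (RAAG.gen L i) = Multiplicative.ofAdd 1)
    (ℓ₀ : RAAG G₀ →* Multiplicative ℤ)
    (hℓ₀ : ∀ i : Fin 6, ℓ₀ (RAAG.gen G₀ i) = Multiplicative.ofAdd 1) :
    Nonempty (ℓ₀.ker ≃* Monoid.PushoutI (fun _ : Bool => (ℓ.ker).subtype)) := by
  have hpath (g : A_L) : ℓ₀ (G₀.ofProd (g, 1)) = ℓ g := by
    have h : ℓ₀.comp G₀.ofPath = ℓ := RAAG.hom_ext fun i => by simp [G₀.ofPath, hℓ₀, hℓ]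
    simpa [G₀.ofProd] using DFunLike.congr_fun h g
  have hpole (b : Bool) : ℓ₀ (G₀.ofProd (1, .of b)) = ofAdd 1 := by
    cases b
    exacts [hℓ₀ 4, hℓ₀ 5]
  have hcomp : (ℓ₀.comp G₀.ofProd).comp G₀.prodEquiv.toMonoidHom = ℓ₀ :=
    MonoidHom.ext fun g => congrArg ℓ₀ (G₀.prodEquiv.symm_apply_apply g)
  exact ⟨(G₀.prodEquiv.kerCongr hcomp).trans (KerDouble.prodKerEquiv (hℓ 0) hpath hpole)⟩
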